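/- arXiv:2201.11820 — 3 statements merged into one kernel-verified Lean document; each statement's English description precedes it below -/
import Mathlib

section
/- Let p, q be primes with p > q, and k the least positive integer with q | (kp - 1). If 1 ≤ k ≤ q/2 (i.e. 2k ≤ q), then q - 2k is the least nonnegative integer m such that q divides mp + 2. -/
/-!
Since `k * p ≡ 1 [MOD q]`, the residue `q - 2k` satisfies `(q - 2k) * p + 2 ≡ -2kp + 2 ≡ 0`.
The same congruence makes `p` invertible modulo `q`, so `m ↦ m * p + 2` is injective on residues
and every solution `m` is congruent to `q - 2k < q`, hence at least `q - 2k`.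
-/

theorem modEq_one_of_dvd_mul_sub_one {q k p : ℕ} (hkp : 0 < k * p) (h : q ∣ k * p - 1) :
    k * p ≡ 1 [MOD q] :=
  ((Nat.modEq_iff_dvd' hkp).mpr h).symm

theorem dvd_sub_two_mul_mul_add_two {q k p : ℕ} (hkp : k * p ≡ 1 [MOD q]) (hk : 2 * k ≤ q) :
    q ∣ (q - 2 * k) * p + 2 := by
  have hkp' : ((k * p : ℕ) : ZMod q) = ((1 : ℕ) : ZMod q) :=
    (ZMod.natCast_eq_natCast_iff _ _ _).mpr hkp
  rw [← ZMod.natCast_eq_zero_iff]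
  push_cast [Nat.cast_sub hk] at hkp' ⊢
  rw [ZMod.natCast_self]
  linear_combination (-2 : ZMod q) * hkp'

theorem le_of_dvd_mul_add_of_coprime {q p r c m : ℕ} (hp : p.Coprime q) (hr : r < q)
    (hrc : q ∣ r * p + c) (hm : q ∣ m * p + c) : r ≤ m := by
  have hmul : m * p ≡ r * p [MOD q] :=
    Nat.ModEq.add_right_cancel' c
      ((Nat.modEq_zero_iff_dvd.mpr hm).trans (Nat.modEq_zero_iff_dvd.mpr hrc).symm)
  have hmod : m % q = r :=
    Eq.trans (Nat.ModEq.cancel_right_of_coprime hp.symm hmul) (Nat.mod_eq_of_lt hr)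
  exact hmod ▸ Nat.mod_le m q

theorem stmt_1_general (p q k : ℕ) (hp : p.Prime)
    (hk_pos : 0 < k) (hk_dvd : q ∣ (k * p - 1))
    (htype1 : 2 * k ≤ q) :
    q ∣ ((q - 2 * k) * p + 2) ∧ ∀ m : ℕ, q ∣ (m * p + 2) → q - 2 * k ≤ m := by
  have hkp : k * p ≡ 1 [MOD q] := modEq_one_of_dvd_mul_sub_one (Nat.mul_pos hk_pos hp.pos) hk_dvd
  have hdvd : q ∣ (q - 2 * k) * p + 2 := dvd_sub_two_mul_mul_add_two hkp htype1
  have hcop : p.Coprime q := Nat.coprime_of_mul_modEq_one k (by rwa [mul_comm] at hkp)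
  exact ⟨hdvd, fun m hm => le_of_dvd_mul_add_of_coprime hcop (by omega) hdvd hm⟩

/-- If `(p,q)` is of type 1 (`2k ≤ q` for the least positive `k` with `q ∣ kp-1`),
then `q - 2k` is the least nonnegative integer `m` with `q ∣ m*p + 2`. -/
theorem stmt_1 (p q k : ℕ) (hp : p.Prime) (hq : q.Prime) (hpq : q < p)
    (hk_pos : 0 < k) (hk_dvd : q ∣ (k * p - 1))
    (hk_min : ∀ k' : ℕ, 0 < k' → q ∣ (k' * p - 1) → k ≤ k')
    (htype1 : 2 * k ≤ q) :
    q ∣ ((q - 2 * k) * p + 2) ∧ ∀ m : ℕ, q ∣ (m * p + 2) → q - 2 * k ≤ m :=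
  stmt_1_general p q k hp hk_pos hk_dvd htype1
end

section
/- With M, c, p, n as above (2M + c = p, M ≥ g ≥ 1, n = qg + 2r -1), let kg + r - 1 ≥ l_1 > l_2 > ... > l_r ≥ 1 be integers and define m_1, ..., m_r by the inequalities (m_i - 1)M ≤ nM + (r-i)c - l_i p < m_i M for i = 1, ..., r. Then m_i + 2 ≤ m_{i+1} for i = 1, ..., r-1, and 1 ≤ m_1, m_r < n. -/
/-! Write `A i = n M + (r - 1 - i) c - l_i p`, so that `m_i - 1 = ⌊A i / M⌋`. Since `2M + c = p`
and `l_{i+1} ≤ l_i - 1`, consecutive values satisfy `A (i+1) ≥ A i + 2M`, which forces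
`m_{i+1} ≥ m_i + 2`. The bound `l_1 ≤ kg + r - 1` together with `qM = kp - 1` gives
`A 0 ≥ M - g ≥ 0`, hence `m_1 ≥ 1`; and `l_r ≥ 1`, `c > 0` give `A (r-1) < (n - 2) M`,
hence `m_r < n`. -/

lemma add_le_of_sub_one_mul_le_of_lt_mul {M A B m m' t : ℤ} (hM : 0 < M) (hm : (m - 1) * M ≤ A)
    (hm' : B < m' * M) (hAB : A + t * M ≤ B) : m + t ≤ m' := by
  have : (m + t - 1) * M < m' * M := by linarith
  have := lt_of_mul_lt_mul_right this hM.le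
  omega

section Values

variable {n M c p l l' g k q r i : ℤ}

lemma value_add_two_mul_le (hp : 0 ≤ p) (hp2Mc : 2 * M + c = p) (hl : l' + 1 ≤ l) :
    n * M + (r - 1 - i) * c - l * p + 2 * M ≤ n * M + (r - 1 - (i + 1)) * c - l' * p := by
  nlinarith

lemma value_first_nonneg (hp : 0 ≤ p) (hn : n = q * g + 2 * r - 1) (hM : q * M = k * p - 1)
    (hMg : g ≤ M) (hp2Mc : 2 * M + c = p) (hl : l ≤ k * g + r - 1) :
    0 ≤ n * M + (r - 1) * c - l * p := by
  have hvalue : n * M + (r - 1) * c - (k * g + r - 1) * p = M - g := by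
    linear_combination M * hn + g * hM + (r - 1) * hp2Mc
  nlinarith

lemma value_last_lt (hp : 0 ≤ p) (hp2Mc : 2 * M + c = p) (hc : 0 < c) (hl : 1 ≤ l) :
    n * M - l * p < (n - 2) * M := by
  nlinarith

end Values

theorem stmt_12_general (p : ℕ) (q k g n M c : ℤ) (r : ℕ) (hr : 0 < r)
    (hn : n = q * g + 2 * (r : ℤ) - 1)
    (hM : q * M = k * p - 1)
    (hMpos : 0 < M) (hcpos : 0 < c) (hMg : g ≤ M) (hp2Mc : 2 * M + c = p)
    (l m : Fin r → ℤ)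
    (hl_dec : ∀ i j : Fin r, i < j → l j < l i)
    (hl_lb : ∀ i, 1 ≤ l i) (hl_ub : ∀ i, l i ≤ k * g + (r : ℤ) - 1)
    (hm : ∀ i : Fin r,
      (m i - 1) * M ≤ n * M + ((r : ℤ) - 1 - (i : ℕ)) * c - l i * p ∧
      n * M + ((r : ℤ) - 1 - (i : ℕ)) * c - l i * p < m i * M) :
    (∀ i j : Fin r, (i : ℕ) + 1 = (j : ℕ) → m i + 2 ≤ m j) ∧
      1 ≤ m ⟨0, hr⟩ ∧ m ⟨r - 1, Nat.sub_lt hr Nat.one_pos⟩ < n := by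
  have hp : (0 : ℤ) ≤ p := Int.natCast_nonneg p
  refine ⟨fun i j hij => ?_, ?_, ?_⟩
  · have hj : ((j : ℕ) : ℤ) = (i : ℕ) + 1 := by omega
    have hl : l j + 1 ≤ l i := hl_dec i j (Fin.lt_def.mpr (by omega))
    refine add_le_of_sub_one_mul_le_of_lt_mul hMpos (hm i).1 (hm j).2 ?_
    rw [hj]
    exact value_add_two_mul_le hp hp2Mc hl
  · have hfirst := (hm ⟨0, hr⟩).2
    simp only [Nat.cast_zero, sub_zero] at hfirst
    have hnonneg := value_first_nonneg hp hn hM hMg hp2Mc (hl_ub ⟨0, hr⟩)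
    exact pos_of_mul_pos_left (hnonneg.trans_lt hfirst) hMpos.le
  · have hlast := (hm ⟨r - 1, Nat.sub_lt hr Nat.one_pos⟩).1
    rw [Nat.cast_pred hr, sub_self, zero_mul, add_zero] at hlast
    have := lt_of_mul_lt_mul_right
      (hlast.trans_lt (value_last_lt hp hp2Mc hcpos (hl_lb _))) hMpos.le
    omega

/-- With `2M + c = p`, `M ≥ g ≥ 1`, `n = qg + 2r - 1`, and
`kg + r - 1 ≥ l₁ > ⋯ > l_r ≥ 1`, the integers `m_i` defined by
`(m_i - 1)M ≤ nM + (r-i)c - l_i p < m_i M` satisfy `m_i + 2 ≤ m_{i+1}`,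
`1 ≤ m_1`, and `m_r < n`. -/
theorem stmt_12 (p : ℕ) (hp : p.Prime) (q k g n M c : ℤ) (r : ℕ) (hr : 0 < r)
    (hq : 0 < q) (hk : 0 < k) (hg : 1 ≤ g)
    (hn : n = q * g + 2 * (r : ℤ) - 1)
    (hM : q * M = k * p - 1) (hc : q * c = (q - 2 * k) * p + 2)
    (hMpos : 0 < M) (hcpos : 0 < c) (hMg : g ≤ M) (hp2Mc : 2 * M + c = p)
    (l m : Fin r → ℤ)
    (hl_dec : ∀ i j : Fin r, i < j → l j < l i)
    (hl_lb : ∀ i, 1 ≤ l i) (hl_ub : ∀ i, l i ≤ k * g + (r : ℤ) - 1)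
    (hm : ∀ i : Fin r,
      (m i - 1) * M ≤ n * M + ((r : ℤ) - 1 - (i : ℕ)) * c - l i * p ∧
      n * M + ((r : ℤ) - 1 - (i : ℕ)) * c - l i * p < m i * M) :
    (∀ i j : Fin r, (i : ℕ) + 1 = (j : ℕ) → m i + 2 ≤ m j) ∧
      1 ≤ m ⟨0, hr⟩ ∧ m ⟨r - 1, Nat.sub_lt hr Nat.one_pos⟩ < n :=
  stmt_12_general p q k g n M c r hr hn hM hMpos hcpos hMg hp2Mc l m hl_dec hl_lb hl_ub hm
end

section
/- With the same setup (2M + c = p, M ≥ g, n = qg + 2r - 1), the map sending a strictly decreasing tuple (l_1 > ... > l_r ≥ 1) with l_1 ≤ kg + r - 1 to the tuple (m_1, ..., m_r) defined by (m_i - 1)M ≤ nM + (r-i)c - l_i p < m_i M is injective: distinct tuples (l_i) and (l_i') yield distinct tuples (m_i) and (m_i'). -/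
theorem eq_of_sub_mul_mem_same_window {M p a u v m : ℤ} (hMp : M ≤ p)
    (hu : (m - 1) * M ≤ a - u * p ∧ a - u * p < m * M)
    (hv : (m - 1) * M ≤ a - v * p ∧ a - v * p < m * M) : u = v := by
  have hM : 0 < M := by linarith [hu.1.trans_lt hu.2]
  have hvu : (v - u) * p < M := by linarith
  have huv : (u - v) * p < M := by linarith
  by_contra hne
  rcases lt_or_gt_of_ne hne with h | h <;> nlinarith

theorem stmt_13_general (p : ℕ) (n M c : ℤ) (r : ℕ)
    (hMpos : 0 < M) (hcpos : 0 < c) (hp2Mc : 2 * M + c = p)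
    (l l' m m' : Fin r → ℤ)
    (hm : ∀ i : Fin r,
      (m i - 1) * M ≤ n * M + ((r : ℤ) - 1 - (i : ℕ)) * c - l i * p ∧
      n * M + ((r : ℤ) - 1 - (i : ℕ)) * c - l i * p < m i * M)
    (hm' : ∀ i : Fin r,
      (m' i - 1) * M ≤ n * M + ((r : ℤ) - 1 - (i : ℕ)) * c - l' i * p ∧
      n * M + ((r : ℤ) - 1 - (i : ℕ)) * c - l' i * p < m' i * M)
    (hne : ∃ i : Fin r, l i ≠ l' i) :
    ∃ i : Fin r, m i ≠ m' i := by
  obtain ⟨i, hi⟩ := hne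
  have hMp : M ≤ p := by omega
  refine ⟨i, fun hmi => hi (eq_of_sub_mul_mem_same_window hMp (hm i) ?_)⟩
  rw [hmi]
  exact hm' i

/-- The map `(l_1 > ⋯ > l_r) ↦ (m_1, ..., m_r)` defined by
`(m_i - 1)M ≤ nM + (r-i)c - l_i p < m_i M` is injective: distinct tuples
`(l_i)` and `(l_i')` give distinct tuples `(m_i)` and `(m_i')`. -/
theorem stmt_13 (p : ℕ) (hp : p.Prime) (q k g n M c : ℤ) (r : ℕ) (hr : 0 < r)
    (hq : 0 < q) (hk : 0 < k) (hg : 1 ≤ g)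
    (hn : n = q * g + 2 * (r : ℤ) - 1)
    (hM : q * M = k * p - 1) (hc : q * c = (q - 2 * k) * p + 2)
    (hMpos : 0 < M) (hcpos : 0 < c) (hMg : g ≤ M) (hp2Mc : 2 * M + c = p)
    (l l' m m' : Fin r → ℤ)
    (hl_dec : ∀ i j : Fin r, i < j → l j < l i)
    (hl_lb : ∀ i, 1 ≤ l i) (hl_ub : ∀ i, l i ≤ k * g + (r : ℤ) - 1)
    (hl'_dec : ∀ i j : Fin r, i < j → l' j < l' i)
    (hl'_lb : ∀ i, 1 ≤ l' i) (hl'_ub : ∀ i, l' i ≤ k * g + (r : ℤ) - 1)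
    (hm : ∀ i : Fin r,
      (m i - 1) * M ≤ n * M + ((r : ℤ) - 1 - (i : ℕ)) * c - l i * p ∧
      n * M + ((r : ℤ) - 1 - (i : ℕ)) * c - l i * p < m i * M)
    (hm' : ∀ i : Fin r,
      (m' i - 1) * M ≤ n * M + ((r : ℤ) - 1 - (i : ℕ)) * c - l' i * p ∧
      n * M + ((r : ℤ) - 1 - (i : ℕ)) * c - l' i * p < m' i * M)
    (hne : ∃ i : Fin r, l i ≠ l' i) :
    ∃ i : Fin r, m i ≠ m' i :=
  stmt_13_general p n M c r hMpos hcpos hp2Mc l l' m m' hm hm' hne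
end
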